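/- arXiv:0804.0597 — 5 statements merged into one kernel-verified Lean document; each statement's English description precedes it below -/
import Mathlib

section
/- Let F be a field, L a loop and H a normal subloop of L. Then for q ∈ L one has 1 − q ∈ ωH if and only if q ∈ H. -/
/-- A loop: a pointed magma with two-sided identity in which both division
equations `a * x = b` and `y * a = b` are uniquely solvable. -/
class MulLoop (L : Type*) extends MulOneClass L where
  existsUnique_left : ∀ a b : L, ∃! x : L, a * x = b
  existsUnique_right : ∀ a b : L, ∃! y : L, y * a = b

/-- A subloop of a loop: a subset containing `1` which is closed under
multiplication and under both (uniquely defined) divisions. -/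
structure Subloop (L : Type*) [MulLoop L] where
  carrier : Set L
  one_mem : (1 : L) ∈ carrier
  mul_mem : ∀ {a b : L}, a ∈ carrier → b ∈ carrier → a * b ∈ carrier
  ldiv_mem : ∀ {a b : L}, a ∈ carrier → b ∈ carrier → ∀ x : L, a * x = b → x ∈ carrier
  rdiv_mem : ∀ {a b : L}, a ∈ carrier → b ∈ carrier → ∀ y : L, y * a = b → y ∈ carrier

/-- A subloop `H` is normal when `xH = Hx`, `x(yH) = (xy)H` and `H(xy) = (Hx)y`. -/
def Subloop.IsNormal {L : Type*} [MulLoop L] (H : Subloop L) : Prop :=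
  (∀ x : L, (fun h => x * h) '' H.carrier = (fun h => h * x) '' H.carrier) ∧
  (∀ x y : L, (fun h => x * (y * h)) '' H.carrier = (fun h => (x * y) * h) '' H.carrier) ∧
  (∀ x y : L, (fun h => h * (x * y)) '' H.carrier = (fun h => (h * x) * y) '' H.carrier)

/-- `ωS`: the two-sided ideal of the (nonassociative) loop algebra `FL`
generated by the elements `1 - h`, `h ∈ S`. -/
noncomputable def omegaIdeal (F : Type*) [Field F] {L : Type*} [MulLoop L] (S : Set L) :
    TwoSidedIdeal (MonoidAlgebra F L) :=
  TwoSidedIdeal.span {x | ∃ h ∈ S, x = 1 - MonoidAlgebra.of F L h}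

/-!
A normal subloop `H` makes "`x ∈ yH`" a congruence of the magma `L`. Linearising the quotient
map `L → L/H` gives a ring homomorphism of loop algebras killing every `1 - h`, `h ∈ H`, hence
killing `ωH`; if `1 - q ∈ ωH`, then `1` and `q` have the same image, i.e. `q ∈ 1H = H`.
-/

section LoopAlgebra

open MonoidAlgebra

theorem mapDomainNonUnitalRingHom_one_sub_of {R L M : Type*} [Ring R] [MulOneClass L] [Mul M]
    (f : L →ₙ* M) (q : L) :
    mapDomainNonUnitalRingHom R f (1 - of R L q) = single (f 1) 1 - single (f q) 1 := by
  rw [map_sub]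
  simp [MonoidAlgebra.one_def]

variable {F : Type*} [Field F] {L M : Type*} [MulLoop L] [Mul M]

theorem omegaIdeal_le_ker_mapDomain (f : L →ₙ* M) {S : Set L} (hS : ∀ h ∈ S, f h = f 1) :
    omegaIdeal F S ≤ TwoSidedIdeal.ker (mapDomainNonUnitalRingHom F f) := by
  refine TwoSidedIdeal.span_le.2 ?_
  rintro _ ⟨h, hh, rfl⟩
  rw [SetLike.mem_coe, TwoSidedIdeal.mem_ker, mapDomainNonUnitalRingHom_one_sub_of, hS h hh,
    sub_self]

theorem apply_eq_apply_one_of_one_sub_of_mem_omegaIdeal (f : L →ₙ* M) {S : Set L}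
    (hS : ∀ h ∈ S, f h = f 1) {q : L} (hq : 1 - of F L q ∈ omegaIdeal F S) : f q = f 1 := by
  have hker := omegaIdeal_le_ker_mapDomain f hS hq
  rw [TwoSidedIdeal.mem_ker, mapDomainNonUnitalRingHom_one_sub_of, sub_eq_zero] at hker
  exact (single_left_injective one_ne_zero hker).symm

end LoopAlgebra

theorem Set.exists_mem_apply_eq_of_image_eq {α β : Type*} {f g : α → β} {S : Set α}
    (e : f '' S = g '' S) {a : α} (ha : a ∈ S) : ∃ b ∈ S, g b = f a :=
  (e ▸ Set.mem_image_of_mem f ha : f a ∈ g '' S)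

namespace Subloop.IsNormal

variable {L : Type*} [MulLoop L] {H : Subloop L}

def cosetCon (hH : H.IsNormal) : Con L where
  r x y := ∃ h ∈ H.carrier, x = y * h
  iseqv.refl x := ⟨1, H.one_mem, (mul_one x).symm⟩
  iseqv.symm := by
    rintro x y ⟨h, hh, rfl⟩
    -- `y = y(hk)` with `hk = 1`, and `y(hH) = (yh)H`
    obtain ⟨k, hhk, -⟩ := MulLoop.existsUnique_left h 1
    obtain ⟨m, hm, hym⟩ :=
      Set.exists_mem_apply_eq_of_image_eq (hH.2.1 y h) (H.ldiv_mem hh H.one_mem k hhk)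
    exact ⟨m, hm, by rw [hym, hhk, mul_one]⟩
  iseqv.trans := by
    rintro x y z ⟨h, hh, rfl⟩ ⟨g, hg, rfl⟩
    obtain ⟨m, hm, hzm⟩ := Set.exists_mem_apply_eq_of_image_eq (hH.2.1 z g).symm hh
    exact ⟨g * m, H.mul_mem hg hm, hzm.symm⟩
  mul' := by
    rintro _ x _ y ⟨h, hh, rfl⟩ ⟨g, hg, rfl⟩
    obtain ⟨h₁, hh₁, e₁⟩ := Set.exists_mem_apply_eq_of_image_eq (hH.1 x) hh
    obtain ⟨h₂, hh₂, e₂⟩ := Set.exists_mem_apply_eq_of_image_eq (hH.2.2 x (y * g)).symm hh₁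
    obtain ⟨h₃, hh₃, e₃⟩ := Set.exists_mem_apply_eq_of_image_eq (hH.1 (x * (y * g))).symm hh₂
    obtain ⟨k, hk, e₄⟩ := Set.exists_mem_apply_eq_of_image_eq (hH.2.1 x y) hg
    obtain ⟨m, hm, e₅⟩ := Set.exists_mem_apply_eq_of_image_eq (hH.2.1 (x * y) k).symm hh₃
    refine ⟨k * m, H.mul_mem hk hm, ?_⟩
    calc x * h * (y * g) = h₁ * x * (y * g) := by rw [← e₁]
      _ = h₂ * (x * (y * g)) := e₂.symm
      _ = x * (y * g) * h₃ := e₃.symm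
      _ = x * y * k * h₃ := by rw [← e₄]
      _ = x * y * (k * m) := e₅.symm

theorem cosetCon_one_iff (hH : H.IsNormal) {q : L} : hH.cosetCon q 1 ↔ q ∈ H.carrier := by
  simp [cosetCon]

end Subloop.IsNormal

/-- Let `F` be a field, `L` a loop and `H` a normal subloop of
`L`. Then for `q ∈ L` one has `1 - q ∈ ωH` if and only if `q ∈ H`. -/
theorem stmt_1 {F : Type} [Field F] {L : Type} [MulLoop L]
    (H : Subloop L) (hH : H.IsNormal) (q : L) :
    (1 - MonoidAlgebra.of F L q) ∈ omegaIdeal F H.carrier ↔ q ∈ H.carrier := by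
  refine ⟨fun hq => ?_, fun hq => TwoSidedIdeal.subset_span ⟨q, hq, rfl⟩⟩
  have hH_collapses : ∀ h ∈ H.carrier, hH.cosetCon.mkMulHom h = hH.cosetCon.mkMulHom 1 :=
    fun h hh => Con.eq _ |>.2 (hH.cosetCon_one_iff.2 hh)
  exact hH.cosetCon_one_iff.1 <| Con.eq _ |>.1 <|
    apply_eq_apply_one_of_one_sub_of_mem_omegaIdeal _ hH_collapses hq
end

section
/- Let F be a field, L a loop and H, H₁, H₂ normal subloops of L. If a family of elements h_i generates the subloop H, then the elements 1 − h_i generate the ideal ωH of FL. Moreover: if H₁ ≠ H₂ then ωH₁ ≠ ωH₂; if H₁ ⊂ H₂ (strictly) then ωH₁ ⊂ ωH₂ (strictly); and if H is the subloop generated by H₁ and H₂, then ωH = ωH₁ + ωH₂. -/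
/-- `S` generates the subloop `H`: `H` is the smallest subloop containing `S`. -/
def Subloop.GeneratedBy {L : Type*} [MulLoop L] (H : Subloop L) (S : Set L) : Prop :=
  S ⊆ H.carrier ∧ ∀ K : Subloop L, S ⊆ K.carrier → H.carrier ⊆ K.carrier

/-!
For any two-sided ideal `J` of `FL` the elements `g` with `1 - g ∈ J` form a subloop, so `ωS`
only depends on the subloop generated by `S`; this gives the statements about generators and
joins. The rest follows from recovering a normal subloop `H` from `ωH`: normality makes the
additive span of the differences `c g - c (g k)`, `k ∈ H`, a two-sided ideal, hence it contains
`ωH`, and the sum of coefficients over `H` vanishes on it. Since this sum is `1` on `1 - g` for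
`g ∉ H`, only the elements of `H` satisfy `1 - g ∈ ωH`.
-/

open MonoidAlgebra

section TwoSidedIdeal

variable {R : Type*} [NonUnitalNonAssocRing R]

theorem TwoSidedIdeal.span_union (s t : Set R) :
    TwoSidedIdeal.span (s ∪ t) = TwoSidedIdeal.span s ⊔ TwoSidedIdeal.span t :=
  GaloisConnection.l_sup (u := ((↑) : TwoSidedIdeal R → Set R))
    fun _ _ => TwoSidedIdeal.span_le

end TwoSidedIdeal

namespace MonoidAlgebra

variable {R : Type*} [Ring R] {M : Type*}

noncomputable def coeffSumOn (S : Set M) : MonoidAlgebra R M →+ R :=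
  (Finsupp.linearCombination R (S.indicator 1)).toAddMonoidHom.comp
    coeffAddEquiv.toAddMonoidHom

theorem coeffSumOn_single (S : Set M) (m : M) (r : R) [Decidable (m ∈ S)] :
    coeffSumOn S (single m r) = if m ∈ S then r else 0 := by
  simp [coeffSumOn, Set.indicator_apply]

variable [Mul M] {D : Set (MonoidAlgebra R M)}

theorem mul_mem_addClosure_of_single_mul_mem
    (hD : ∀ (m : M) (r : R), ∀ z ∈ D, single m r * z ∈ D)
    (x : MonoidAlgebra R M) {y : MonoidAlgebra R M} (hy : y ∈ AddSubgroup.closure D) :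
    x * y ∈ AddSubgroup.closure D := by
  induction hy using AddSubgroup.closure_induction with
  | mem z hz =>
    induction x using MonoidAlgebra.induction_linear with
    | zero => simp
    | add a b ha hb => rw [add_mul]; exact add_mem ha hb
    | single m r => exact AddSubgroup.subset_closure (hD m r z hz)
  | zero => simp
  | add a b _ _ ha hb => rw [mul_add]; exact add_mem ha hb
  | neg a _ ha => rw [mul_neg]; exact neg_mem ha

theorem mul_mem_addClosure_of_mul_single_mem
    (hD : ∀ (m : M) (r : R), ∀ z ∈ D, z * single m r ∈ D)
    {x : MonoidAlgebra R M} (hx : x ∈ AddSubgroup.closure D) (y : MonoidAlgebra R M) :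
    x * y ∈ AddSubgroup.closure D := by
  induction hx using AddSubgroup.closure_induction with
  | mem z hz =>
    induction y using MonoidAlgebra.induction_linear with
    | zero => simp
    | add a b ha hb => rw [mul_add]; exact add_mem ha hb
    | single m r => exact AddSubgroup.subset_closure (hD m r z hz)
  | zero => simp
  | add a b _ _ ha hb => rw [add_mul]; exact add_mem ha hb
  | neg a _ ha => rw [neg_mul]; exact neg_mem ha

noncomputable def addClosureTwoSidedIdeal (D : Set (MonoidAlgebra R M))
    (hl : ∀ (m : M) (r : R), ∀ z ∈ D, single m r * z ∈ D)
    (hr : ∀ (m : M) (r : R), ∀ z ∈ D, z * single m r ∈ D) :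
    TwoSidedIdeal (MonoidAlgebra R M) :=
  .mk' (AddSubgroup.closure D) (zero_mem _) add_mem neg_mem
    (mul_mem_addClosure_of_single_mul_mem hl _) (mul_mem_addClosure_of_mul_single_mem hr · _)

theorem mem_addClosureTwoSidedIdeal {hl hr} {x : MonoidAlgebra R M} :
    x ∈ addClosureTwoSidedIdeal D hl hr ↔ x ∈ AddSubgroup.closure D :=
  TwoSidedIdeal.mem_mk' ..

end MonoidAlgebra

namespace Subloop

variable {L : Type*} [MulLoop L] {H : Subloop L}

theorem mul_mem_iff_of_mem_right {g k : L} (hk : k ∈ H.carrier) :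
    g * k ∈ H.carrier ↔ g ∈ H.carrier :=
  ⟨fun hgk => H.rdiv_mem hk hgk g rfl, fun hg => H.mul_mem hg hk⟩

theorem IsNormal.exists_mul_mul_eq_of_mem_left (hN : H.IsNormal) {k : L} (hk : k ∈ H.carrier)
    (x g : L) : ∃ k' ∈ H.carrier, (x * g) * k' = x * (g * k) := by
  have : x * (g * k) ∈ (fun h => x * (g * h)) '' H.carrier := ⟨k, hk, rfl⟩
  rwa [hN.2.1 x g] at this

theorem IsNormal.exists_mul_mul_eq_of_mem_right (hN : H.IsNormal) {k : L} (hk : k ∈ H.carrier)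
    (g a : L) : ∃ k' ∈ H.carrier, (g * a) * k' = (g * k) * a := by
  obtain ⟨k₁, hk₁, e₁⟩ : g * k ∈ (fun h => h * g) '' H.carrier := hN.1 g ▸ ⟨k, hk, rfl⟩
  obtain ⟨k₂, hk₂, e₂⟩ : (k₁ * g) * a ∈ (fun h => h * (g * a)) '' H.carrier :=
    (hN.2.2 g a).symm ▸ ⟨k₁, hk₁, rfl⟩
  obtain ⟨k₃, hk₃, e₃⟩ : k₂ * (g * a) ∈ (fun h => (g * a) * h) '' H.carrier :=
    (hN.1 (g * a)).symm ▸ ⟨k₂, hk₂, rfl⟩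
  exact ⟨k₃, hk₃, by simp only at e₁ e₂ e₃; rw [e₃, e₂, e₁]⟩

variable (R : Type*) [Ring R]

def ofTwoSidedIdeal (J : TwoSidedIdeal (MonoidAlgebra R L)) : Subloop L where
  carrier := {g | 1 - of R L g ∈ J}
  one_mem := show 1 - of R L 1 ∈ J by rw [map_one, sub_self]; exact zero_mem J
  mul_mem {a b} ha hb := by
    have : 1 - of R L (a * b) = (1 - of R L a) + of R L a * (1 - of R L b) := by
      rw [map_mul, mul_sub, mul_one]; abel
    show _ ∈ J
    rw [this]; exact J.add_mem ha (J.mul_mem_left _ _ hb)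
  ldiv_mem {a b} ha hb x hx := by
    have : 1 - of R L x = (1 - of R L b) - (1 - of R L a) * of R L x := by
      rw [sub_mul, one_mul, ← map_mul, hx]; abel
    show _ ∈ J
    rw [this]; exact J.sub_mem hb (J.mul_mem_right _ _ ha)
  rdiv_mem {a b} ha hb y hy := by
    have : 1 - of R L y = (1 - of R L b) - of R L y * (1 - of R L a) := by
      rw [mul_sub, mul_one, ← map_mul, hy]; abel
    show _ ∈ J
    rw [this]; exact J.sub_mem hb (J.mul_mem_left _ _ ha)

variable (H) in
def cosetDiffs : Set (MonoidAlgebra R L) :=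
  {z | ∃ (c : R) (g k : L), k ∈ H.carrier ∧ z = single g c - single (g * k) c}

variable {R}

theorem IsNormal.single_mul_mem_cosetDiffs (hN : H.IsNormal) (x : L) (r : R) :
    ∀ z ∈ H.cosetDiffs R, single x r * z ∈ H.cosetDiffs R := by
  rintro _ ⟨c, g, k, hk, rfl⟩
  obtain ⟨k', hk', e⟩ := hN.exists_mul_mul_eq_of_mem_left hk x g
  exact ⟨r * c, x * g, k', hk', by rw [mul_sub, single_mul_single, single_mul_single, e]⟩

theorem IsNormal.mul_single_mem_cosetDiffs (hN : H.IsNormal) (x : L) (r : R) :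
    ∀ z ∈ H.cosetDiffs R, z * single x r ∈ H.cosetDiffs R := by
  rintro _ ⟨c, g, k, hk, rfl⟩
  obtain ⟨k', hk', e⟩ := hN.exists_mul_mul_eq_of_mem_right hk g x
  exact ⟨c * r, g * x, k', hk', by rw [sub_mul, single_mul_single, single_mul_single, e]⟩

theorem coeffSumOn_eq_zero_of_mem_addClosure {z : MonoidAlgebra R L}
    (hz : z ∈ AddSubgroup.closure (H.cosetDiffs R)) : coeffSumOn H.carrier z = 0 := by
  classical
  refine (AddSubgroup.closure_le (coeffSumOn H.carrier).ker).2 ?_ hz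
  rintro _ ⟨c, g, k, hk, rfl⟩
  simp [coeffSumOn_single, mul_mem_iff_of_mem_right hk]

end Subloop

section omegaIdeal

variable {F : Type*} [Field F] {L : Type*} [MulLoop L]

theorem omegaIdeal_eq_span_image (S : Set L) :
    omegaIdeal F S = TwoSidedIdeal.span ((fun h => 1 - of F L h) '' S) := by
  simp only [omegaIdeal, Set.image, eq_comm]

theorem omegaIdeal_mono {S T : Set L} (h : S ⊆ T) : omegaIdeal F S ≤ omegaIdeal F T := by
  simpa only [omegaIdeal_eq_span_image] using TwoSidedIdeal.span_mono (Set.image_mono h)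

theorem omegaIdeal_union (S T : Set L) :
    omegaIdeal F (S ∪ T) = omegaIdeal F S ⊔ omegaIdeal F T := by
  simp only [omegaIdeal_eq_span_image, Set.image_union, TwoSidedIdeal.span_union]

theorem Subloop.GeneratedBy.omegaIdeal_eq {H : Subloop L} {S : Set L} (hgen : H.GeneratedBy S) :
    omegaIdeal F H.carrier = omegaIdeal F S := by
  refine le_antisymm ?_ (omegaIdeal_mono hgen.1)
  refine TwoSidedIdeal.span_le.2 ?_
  rintro _ ⟨h, hh, rfl⟩
  have hS : S ⊆ (Subloop.ofTwoSidedIdeal F (omegaIdeal F S)).carrier :=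
    fun s hs => TwoSidedIdeal.subset_span ⟨s, hs, rfl⟩
  exact hgen.2 _ hS hh

theorem Subloop.IsNormal.mem_of_one_sub_mem_omegaIdeal {H : Subloop L} (hN : H.IsNormal) {g : L}
    (hg : 1 - of F L g ∈ omegaIdeal F H.carrier) : g ∈ H.carrier := by
  classical
  let I := addClosureTwoSidedIdeal (H.cosetDiffs F)
    hN.single_mul_mem_cosetDiffs hN.mul_single_mem_cosetDiffs
  have hωI : omegaIdeal F H.carrier ≤ I := by
    refine TwoSidedIdeal.span_le.2 ?_
    rintro _ ⟨h, hh, rfl⟩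
    refine mem_addClosureTwoSidedIdeal.2 (AddSubgroup.subset_closure ⟨1, 1, h, hh, ?_⟩)
    rw [one_mul, of_apply, one_def]
  have hsum := Subloop.coeffSumOn_eq_zero_of_mem_addClosure
    (mem_addClosureTwoSidedIdeal.1 (hωI hg))
  by_contra hgH
  simp [one_def, coeffSumOn_single, H.one_mem, hgH] at hsum

theorem omegaIdeal_le_omegaIdeal_iff {H₁ H₂ : Subloop L} (hN₂ : H₂.IsNormal) :
    omegaIdeal F H₁.carrier ≤ omegaIdeal F H₂.carrier ↔ H₁.carrier ⊆ H₂.carrier :=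
  ⟨fun hle _ hg =>
    hN₂.mem_of_one_sub_mem_omegaIdeal (hle (TwoSidedIdeal.subset_span ⟨_, hg, rfl⟩)),
    omegaIdeal_mono⟩

end omegaIdeal

theorem stmt_2_general {F : Type} [Field F] {L : Type} [MulLoop L]
    (H H₁ H₂ : Subloop L) (hH₁ : H₁.IsNormal) (hH₂ : H₂.IsNormal) :
    (∀ {ι : Type} (h : ι → L), H.GeneratedBy (Set.range h) →
      omegaIdeal F H.carrier
        = TwoSidedIdeal.span {x | ∃ i : ι, x = 1 - MonoidAlgebra.of F L (h i)}) ∧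
    (H₁.carrier ≠ H₂.carrier →
      omegaIdeal F (L := L) H₁.carrier ≠ omegaIdeal F H₂.carrier) ∧
    (H₁.carrier ⊂ H₂.carrier →
      omegaIdeal F (L := L) H₁.carrier < omegaIdeal F H₂.carrier) ∧
    (H.GeneratedBy (H₁.carrier ∪ H₂.carrier) →
      omegaIdeal F H.carrier
        = omegaIdeal F (L := L) H₁.carrier ⊔ omegaIdeal F H₂.carrier) := by
  have hle₁₂ := omegaIdeal_le_omegaIdeal_iff (F := F) (H₁ := H₁) hH₂
  have hle₂₁ := omegaIdeal_le_omegaIdeal_iff (F := F) (H₁ := H₂) hH₁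
  refine ⟨fun h hgen => ?_, fun hne heq => ?_, fun hlt => ?_, fun hgen => ?_⟩
  · rw [hgen.omegaIdeal_eq, omegaIdeal_eq_span_image, ← Set.range_comp]
    simp only [Set.range, Function.comp_apply, eq_comm]
  · exact hne (subset_antisymm (hle₁₂.1 heq.le) (hle₂₁.1 heq.ge))
  · exact lt_of_le_not_ge (hle₁₂.2 hlt.1) (mt hle₂₁.1 hlt.2)
  · rw [hgen.omegaIdeal_eq, omegaIdeal_union]

/-- Let `F` be a field, `L` a loop and `H, H₁, H₂` normal
subloops of `L`.  (a) If a family of elements `h_i` (`i : ι`) generates the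
subloop `H`, then the elements `1 - h_i` generate the ideal `ωH` of `FL`.
Moreover (b) if `H₁ ≠ H₂` then `ωH₁ ≠ ωH₂`; (c) if `H₁ ⊂ H₂` strictly then
`ωH₁ ⊂ ωH₂` strictly; and (d) if `H` is the subloop generated by `H₁` and `H₂`,
then `ωH = ωH₁ + ωH₂` (the sum being the join of two-sided ideals). -/
theorem stmt_2 {F : Type} [Field F] {L : Type} [MulLoop L]
    (H H₁ H₂ : Subloop L) (hH : H.IsNormal) (hH₁ : H₁.IsNormal) (hH₂ : H₂.IsNormal) :
    (∀ {ι : Type} (h : ι → L), H.GeneratedBy (Set.range h) →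
      omegaIdeal F H.carrier
        = TwoSidedIdeal.span {x | ∃ i : ι, x = 1 - MonoidAlgebra.of F L (h i)}) ∧
    (H₁.carrier ≠ H₂.carrier →
      omegaIdeal F (L := L) H₁.carrier ≠ omegaIdeal F H₂.carrier) ∧
    (H₁.carrier ⊂ H₂.carrier →
      omegaIdeal F (L := L) H₁.carrier < omegaIdeal F H₂.carrier) ∧
    (H.GeneratedBy (H₁.carrier ∪ H₂.carrier) →
      omegaIdeal F H.carrier
        = omegaIdeal F (L := L) H₁.carrier ⊔ omegaIdeal F H₂.carrier) :=
  stmt_2_general H H₁ H₂ hH₁ hH₂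
end

section
/- Let (L,·) be an IP-loop over a field F and let φ be a homomorphism of the loop algebra (FL, +, ·) into an F-algebra. Then the image φ(L) of the loop (L,·) under φ, with the induced multiplication, is again a loop (i.e., both division equations are uniquely solvable in φ(L)). -/
/-- An IP-loop: a loop with two-sided inverses satisfying
`x⁻¹(xy) = y` and `(yx)x⁻¹ = y`. -/
class IPLoop (L : Type*) extends MulLoop L, Inv L where
  inv_mul_cancel_left : ∀ x y : L, x⁻¹ * (x * y) = y
  mul_inv_cancel_right : ∀ x y : L, (y * x) * x⁻¹ = y

/-- Let `(L,·)` be an IP-loop over a field `F` and let `φ` be a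
homomorphism of the loop algebra `(FL, +, ·)` into an `F`-algebra `A` (an
`F`-linear multiplicative map).  Then the image `φ(L)` of the loop `(L,·)`
under `φ`, with the induced multiplication, is again a loop: it is closed under
multiplication, has a two-sided identity, and both division equations are
uniquely solvable in `φ(L)`. -/
theorem stmt_6 {F : Type} [Field F] {L : Type} [IPLoop L]
    {A : Type} [NonUnitalNonAssocRing A] [Module F A]
    (φ : MonoidAlgebra F L →ₗ[F] A)
    (hφmul : ∀ a b : MonoidAlgebra F L, φ (a * b) = φ a * φ b) :
    (∀ a ∈ Set.range fun q : L => φ (MonoidAlgebra.of F L q),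
      ∀ b ∈ Set.range fun q : L => φ (MonoidAlgebra.of F L q),
        a * b ∈ Set.range fun q : L => φ (MonoidAlgebra.of F L q)) ∧
    (∃ e ∈ Set.range fun q : L => φ (MonoidAlgebra.of F L q),
      ∀ a ∈ Set.range fun q : L => φ (MonoidAlgebra.of F L q), e * a = a ∧ a * e = a) ∧
    (∀ a ∈ Set.range fun q : L => φ (MonoidAlgebra.of F L q),
      ∀ b ∈ Set.range fun q : L => φ (MonoidAlgebra.of F L q),
        (∃! x : A, x ∈ (Set.range fun q : L => φ (MonoidAlgebra.of F L q)) ∧ a * x = b) ∧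
        (∃! y : A, y ∈ (Set.range fun q : L => φ (MonoidAlgebra.of F L q)) ∧ y * a = b)) := by
  have key : ∀ p q : L,
      φ (MonoidAlgebra.of F L p) * φ (MonoidAlgebra.of F L q)
        = φ (MonoidAlgebra.of F L (p * q)) := by
    intro p q
    rw [map_mul, hφmul]
  refine ⟨?_, ?_, ?_⟩
  · rintro a ⟨p, rfl⟩ b ⟨q, rfl⟩
    exact ⟨p * q, (key p q).symm⟩
  · refine ⟨φ (MonoidAlgebra.of F L 1), ⟨1, rfl⟩, ?_⟩
    rintro a ⟨p, rfl⟩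
    exact ⟨by rw [key, one_mul], by rw [key, mul_one]⟩
  · rintro a ⟨p, rfl⟩ b ⟨q, rfl⟩
    obtain ⟨x₀, hx₀, -⟩ := MulLoop.existsUnique_left p q
    obtain ⟨y₀, hy₀, -⟩ := MulLoop.existsUnique_right p q
    have uniqL : ∀ z : L, φ (MonoidAlgebra.of F L p) * φ (MonoidAlgebra.of F L z)
        = φ (MonoidAlgebra.of F L q) →
        φ (MonoidAlgebra.of F L z) = φ (MonoidAlgebra.of F L (p⁻¹ * q)) := by
      intro z hz
      rw [key] at hz
      calc φ (MonoidAlgebra.of F L z)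
          = φ (MonoidAlgebra.of F L (p⁻¹ * (p * z))) := by
            rw [IPLoop.inv_mul_cancel_left]
        _ = φ (MonoidAlgebra.of F L p⁻¹) * φ (MonoidAlgebra.of F L (p * z)) :=
            (key _ _).symm
        _ = φ (MonoidAlgebra.of F L p⁻¹) * φ (MonoidAlgebra.of F L q) := by rw [hz]
        _ = φ (MonoidAlgebra.of F L (p⁻¹ * q)) := key _ _
    have uniqR : ∀ z : L, φ (MonoidAlgebra.of F L z) * φ (MonoidAlgebra.of F L p)
        = φ (MonoidAlgebra.of F L q) →
        φ (MonoidAlgebra.of F L z) = φ (MonoidAlgebra.of F L (q * p⁻¹)) := by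
      intro z hz
      rw [key] at hz
      calc φ (MonoidAlgebra.of F L z)
          = φ (MonoidAlgebra.of F L ((z * p) * p⁻¹)) := by
            rw [IPLoop.mul_inv_cancel_right]
        _ = φ (MonoidAlgebra.of F L (z * p)) * φ (MonoidAlgebra.of F L p⁻¹) :=
            (key _ _).symm
        _ = φ (MonoidAlgebra.of F L q) * φ (MonoidAlgebra.of F L p⁻¹) := by rw [hz]
        _ = φ (MonoidAlgebra.of F L (q * p⁻¹)) := key _ _
    constructor
    · refine ⟨φ (MonoidAlgebra.of F L x₀), ⟨⟨x₀, rfl⟩, by rw [key, hx₀]⟩, ?_⟩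
      rintro x ⟨⟨z, rfl⟩, hz⟩
      exact (uniqL z hz).trans (uniqL x₀ (by rw [key, hx₀])).symm
    · refine ⟨φ (MonoidAlgebra.of F L y₀), ⟨⟨y₀, rfl⟩, by rw [key, hy₀]⟩, ?_⟩
      rintro y ⟨⟨z, rfl⟩, hz⟩
      exact (uniqR z hz).trans (uniqR y₀ (by rw [key, hy₀])).symm
end

section
/- Let M be a non-associative free Moufang loop and F a field. Then the quotient FM/I(M) of the loop algebra FM by the ideal I(M) is an alternative algebra with unit. -/
/-- A Moufang loop: a loop satisfying the Moufang identity `x(y·zy) = (xy·z)y`. -/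
class MoufangLoop (M : Type*) extends MulLoop M where
  moufang : ∀ x y z : M, x * (y * (z * y)) = ((x * y) * z) * y

/-- The associator `(a,b,c) = (ab)c - a(bc)` of loop elements,
inside the (nonassociative) loop algebra `FM`. -/
noncomputable def loopAssociator (F : Type*) [Field F] {M : Type*} [MulLoop M]
    (a b c : M) : MonoidAlgebra F M :=
  (MonoidAlgebra.of F M a * MonoidAlgebra.of F M b) * MonoidAlgebra.of F M c
    - MonoidAlgebra.of F M a * (MonoidAlgebra.of F M b * MonoidAlgebra.of F M c)

/-- `I(M)`: the two-sided ideal of `FM` generated by all elements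
`(a,b,c) + (b,a,c)` and `(a,b,c) + (a,c,b)` with `a, b, c ∈ M`. -/
noncomputable def assocIdeal (F : Type*) [Field F] (M : Type*) [MulLoop M] :
    TwoSidedIdeal (MonoidAlgebra F M) :=
  TwoSidedIdeal.span
    ({x | ∃ a b c : M, x = loopAssociator F a b c + loopAssociator F b a c} ∪
     {x | ∃ a b c : M, x = loopAssociator F a b c + loopAssociator F a c b})

/-
A Moufang loop is right alternative (the Moufang identity with `z = 1`) and, since taking left
inverses reverses products, also left alternative. So in `FM` the associator vanishes
on `(a, a, c)` and on `(c, a, a)` for `a, c ∈ M`. Modulo `I(M)` the associator is skew-symmetric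
in its first two and in its last two arguments (this is checked on the additive generators
`r • a` of `FM` and extends by additivity), so `x ↦ (x, x, z)` and `x ↦ (z, x, x)` are additive
there: `(x + y, x + y, z) = (x, x, z) + (y, y, z) + ((x, y, z) + (y, x, z))`. Vanishing on
generators, they vanish identically.
-/

namespace MulLoop

variable {M : Type*} [MulLoop M]

theorem mul_right_cancel {a x y : M} (h : x * a = y * a) : x = y :=
  (existsUnique_right a (y * a)).unique h rfl

noncomputable def leftInv (y : M) : M :=
  (existsUnique_right y 1).exists.choose

theorem leftInv_mul (y : M) : leftInv y * y = 1 :=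
  (existsUnique_right y 1).exists.choose_spec

end MulLoop

namespace MoufangLoop

open MulLoop

variable {M : Type*} [MoufangLoop M]

theorem leftInv_mul_cancel_left (y w : M) : leftInv y * (y * w) = w := by
  obtain ⟨z, rfl⟩ := (MulLoop.existsUnique_right y w).exists
  simpa [leftInv_mul] using moufang (leftInv y) y z

theorem mul_leftInv_cancel_right (w y : M) : w * y * leftInv y = w := by
  refine mul_right_cancel (a := y) ?_
  simpa [leftInv_mul] using (moufang w y (leftInv y)).symm

theorem leftInv_mul_rev (x y : M) : leftInv (x * y) = leftInv y * leftInv x := by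
  have hy : y * leftInv (x * y) = leftInv x := by
    simpa [leftInv_mul_cancel_left] using mul_leftInv_cancel_right (leftInv x) (x * y)
  simpa [hy] using (leftInv_mul_cancel_left y (leftInv (x * y))).symm

theorem leftInv_injective : Function.Injective (leftInv : M → M) := by
  intro u v h
  have mul_leftInv (w : M) : w * leftInv w = 1 := by
    simpa using mul_leftInv_cancel_right 1 w
  refine mul_right_cancel (a := leftInv u) ?_
  rw [mul_leftInv, h, mul_leftInv]

theorem right_alternative (x y : M) : x * y * y = x * (y * y) := by
  simpa using (moufang x y 1).symm

theorem left_alternative (x y : M) : x * x * y = x * (x * y) := by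
  apply leftInv_injective
  simp only [leftInv_mul_rev, right_alternative]

end MoufangLoop

namespace AddMonoidHom

variable {A N : Type*} [AddCommMonoid A] [AddCommMonoid N] {S : Set A}

theorem eq_zero_of_closure_eq_top₃ (hS : AddSubmonoid.closure S = ⊤) (φ : A →+ A →+ A →+ N)
    (h : ∀ a ∈ S, ∀ b ∈ S, ∀ c ∈ S, φ a b c = 0) : φ = 0 :=
  eq_of_eqOn_denseM hS fun a ha => eq_of_eqOn_denseM hS fun b hb =>
    eq_of_eqOn_denseM hS fun c hc => h a ha b hb c hc

theorem apply_self_eq_zero_of_closure_eq_top (hS : AddSubmonoid.closure S = ⊤)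
    (B : A →+ A →+ N) (hskew : ∀ x y, B x y + B y x = 0) (hdiag : ∀ a ∈ S, B a a = 0)
    (x : A) : B x x = 0 := by
  have hx : x ∈ AddSubmonoid.closure S := hS ▸ AddSubmonoid.mem_top x
  induction hx using AddSubmonoid.closure_induction with
  | mem a ha => exact hdiag a ha
  | zero => simp
  | add x y _ _ hx hy =>
    calc B (x + y) (x + y) = B x x + B y y + (B x y + B y x) := by
          simp only [map_add, add_apply]; abel
      _ = 0 := by rw [hx, hy, hskew, add_zero, add_zero]

end AddMonoidHom

section LoopAlgebra

open MonoidAlgebra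

variable {F : Type*} [Field F] {M : Type*}

theorem associator_single [MulLoop M] (a b c : M) (r s t : F) :
    associator (single a r) (single b s) (single c t) =
      single 1 (r * s * t) * loopAssociator F a b c := by
  simp [associator, loopAssociator, mul_sub, mul_assoc]

theorem loopAssociator_self_left [MoufangLoop M] (a c : M) : loopAssociator F a a c = 0 := by
  simp [loopAssociator, MoufangLoop.left_alternative]

theorem loopAssociator_self_right [MoufangLoop M] (a c : M) : loopAssociator F c a a = 0 := by
  simp [loopAssociator, MoufangLoop.right_alternative]

variable (F M) in
abbrev LoopQuotient [MulLoop M] : Type _ := (assocIdeal F M).ringCon.Quotient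

namespace LoopQuotient

section MulLoop

variable [MulLoop M]

theorem coe_associator (p q r : MonoidAlgebra F M) :
    associator (p : LoopQuotient F M) q r = ↑(associator p q r) := by
  simp only [associator, RingCon.coe_mul, RingCon.coe_sub]

theorem coe_eq_zero_of_mem {p : MonoidAlgebra F M} (hp : p ∈ assocIdeal F M) :
    (p : LoopQuotient F M) = 0 :=
  (RingCon.eq _).mpr ((TwoSidedIdeal.mem_iff _ _).mp hp)

theorem closure_range_coe_single :
    AddSubmonoid.closure
      (Set.range fun p : M × F => ((single p.1 p.2 : MonoidAlgebra F M) : LoopQuotient F M)) =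
      ⊤ := by
  refine (AddSubmonoid.eq_top_iff' _).mpr fun u => ?_
  obtain ⟨p, rfl⟩ := (assocIdeal F M).ringCon.mk'_surjective u
  induction p using MonoidAlgebra.induction_linear with
  | zero => exact zero_mem _
  | add p q hp hq => simpa using add_mem hp hq
  | single g r => exact AddSubmonoid.subset_closure ⟨(g, r), rfl⟩

theorem associator_add_associator_swap₁₂ (x y z : LoopQuotient F M) :
    associator x y z + associator y x z = 0 := by
  suffices h : AddMonoidHom.associator + AddMonoidHom.associator.flip = 0 by
    simpa using congr($h x y z)
  refine AddMonoidHom.eq_zero_of_closure_eq_top₃ closure_range_coe_single _ ?_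
  simp only [Set.forall_mem_range, Prod.forall]
  intro a r b s c t
  simp only [AddMonoidHom.add_apply, AddMonoidHom.flip_apply, AddMonoidHom.associator_apply,
    coe_associator, ← RingCon.coe_add, associator_single, mul_comm s r, ← mul_add]
  exact coe_eq_zero_of_mem <| TwoSidedIdeal.mul_mem_left _ _ _ <|
    TwoSidedIdeal.subset_span (Or.inl ⟨a, b, c, rfl⟩)

theorem associator_add_associator_swap₂₃ (x y z : LoopQuotient F M) :
    associator x y z + associator x z y = 0 := by
  suffices h : AddMonoidHom.associator +
      AddMonoidHom.flipHom.comp (AddMonoidHom.associator (R := LoopQuotient F M)) = 0 by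
    simpa using congr($h x y z)
  refine AddMonoidHom.eq_zero_of_closure_eq_top₃ closure_range_coe_single _ ?_
  simp only [Set.forall_mem_range, Prod.forall]
  intro a r b s c t
  simp only [AddMonoidHom.add_apply, AddMonoidHom.coe_comp, Function.comp_apply,
    AddMonoidHom.flipHom_apply, AddMonoidHom.flip_apply, AddMonoidHom.associator_apply,
    coe_associator, ← RingCon.coe_add, associator_single, mul_right_comm r t s, ← mul_add]
  exact coe_eq_zero_of_mem <| TwoSidedIdeal.mul_mem_left _ _ _ <|
    TwoSidedIdeal.subset_span (Or.inr ⟨a, b, c, rfl⟩)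

end MulLoop

variable [MoufangLoop M]

theorem associator_coe_single_self_left (a : M) (r : F) (z : LoopQuotient F M) :
    associator (↑(single a r : MonoidAlgebra F M) : LoopQuotient F M) ↑(single a r) z = 0 := by
  suffices h : AddMonoidHom.associator (R := LoopQuotient F M) (single a r) (single a r) = 0 by
    simpa using congr($h z)
  refine AddMonoidHom.eq_of_eqOn_denseM closure_range_coe_single ?_
  simp only [Set.EqOn, Set.forall_mem_range, Prod.forall]
  intro c t
  simp [coe_associator, associator_single, loopAssociator_self_left]

theorem associator_coe_single_self_right (a : M) (r : F) (z : LoopQuotient F M) :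
    associator z (↑(single a r : MonoidAlgebra F M) : LoopQuotient F M) ↑(single a r) = 0 := by
  -- the additive map `z ↦ (z, s, s)` for `s = r • a`
  suffices h : ((AddMonoidHom.associator (R := LoopQuotient F M)).compr₂
      (AddMonoidHom.eval ↑(single a r))).flip (single a r) = 0 by
    simpa using congr($h z)
  refine AddMonoidHom.eq_of_eqOn_denseM closure_range_coe_single ?_
  simp only [Set.EqOn, Set.forall_mem_range, Prod.forall]
  intro c t
  simp [coe_associator, associator_single, loopAssociator_self_right]

theorem associator_self_left (x z : LoopQuotient F M) : associator x x z = 0 :=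
  (AddMonoidHom.associator.compr₂ (AddMonoidHom.eval z)).apply_self_eq_zero_of_closure_eq_top
    closure_range_coe_single (fun x y => by simpa using associator_add_associator_swap₁₂ x y z)
    (Set.forall_mem_range.mpr fun p => associator_coe_single_self_left p.1 p.2 z) x

theorem associator_self_right (x z : LoopQuotient F M) : associator z x x = 0 :=
  (AddMonoidHom.associator z).apply_self_eq_zero_of_closure_eq_top closure_range_coe_single
    (fun x y => by simpa using associator_add_associator_swap₂₃ z x y)
    (Set.forall_mem_range.mpr fun p => associator_coe_single_self_right p.1 p.2 z) x

end LoopQuotient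

end LoopAlgebra

theorem stmt_9_general {F : Type} [Field F] {M : Type} [MoufangLoop M] :
    (∀ u v : (assocIdeal F M).ringCon.Quotient,
      (u * u) * v = u * (u * v) ∧ (v * u) * u = v * (u * u)) ∧
    (∀ u : (assocIdeal F M).ringCon.Quotient, 1 * u = u ∧ u * 1 = u) :=
  ⟨fun u v => ⟨sub_eq_zero.mp (LoopQuotient.associator_self_left u v),
      sub_eq_zero.mp (LoopQuotient.associator_self_right u v)⟩,
    fun u => ⟨one_mul u, mul_one u⟩⟩

/-- Let `M` be a non-associative free Moufang loop (a free
object on generators `x : X → M` in the variety of Moufang loops) and `F` a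
field.  Then the quotient `FM/I(M)` of the loop algebra `FM` by the ideal
`I(M)` is an alternative algebra with unit. -/
theorem stmt_9 {F : Type} [Field F] {X : Type} {M : Type} [MoufangLoop M]
    (x : X → M)
    (hfree : ∀ (N : Type) [MoufangLoop N] (f : X → N),
      ∃! g : M → N, (∀ a b : M, g (a * b) = g a * g b) ∧ ∀ i : X, g (x i) = f i)
    (hna : ∃ a b c : M, (a * b) * c ≠ a * (b * c)) :
    (∀ u v : (assocIdeal F M).ringCon.Quotient,
      (u * u) * v = u * (u * v) ∧ (v * u) * u = v * (u * u)) ∧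
    (∀ u : (assocIdeal F M).ringCon.Quotient, 1 * u = u ∧ u * 1 = u) :=
  stmt_9_general
end

section
/- Let FM and F M̄ be the loop algebras of a free Moufang loop (M,·) and of its corresponding circle loop (M̄,∘), identified via the isomorphism φ(Σ α_u u) = Σ α_u ū. Then I(M) = I(M̄), i.e., the ideal of FM generated by the associator relations of (M,·) coincides with the ideal generated by the associator relations of (M̄,∘). -/
/-- The circle composition `a ∘ b = a + b - ab`. -/
def circleMul {A : Type*} [NonUnitalNonAssocRing A] (a b : A) : A := a + b - a * b

/-- `ū = 1 - u` in the loop algebra. -/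
noncomputable def barElt (F : Type*) [Field F] {M : Type*} [MulLoop M] (u : M) :
    MonoidAlgebra F M :=
  1 - MonoidAlgebra.of F M u

/-- The associator `(ā,b̄,c̄) = (ā∘b̄)∘c̄ - ā∘(b̄∘c̄)` of elements of the circle
loop `M̄ = {1 - u : u ∈ M}`, computed with the circle composition inside `FM`
(which is the multiplication of `F M̄` under the identification `φ`). -/
noncomputable def circleAssociator (F : Type*) [Field F] {M : Type*} [MulLoop M]
    (a b c : M) : MonoidAlgebra F M :=
  circleMul (circleMul (barElt F a) (barElt F b)) (barElt F c)
    - circleMul (barElt F a) (circleMul (barElt F b) (barElt F c))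

/-- `I(M̄)`: the ideal of `FM` generated by the associator relations of the
circle loop `(M̄, ∘)`. -/
noncomputable def circleAssocIdeal (F : Type*) [Field F] (M : Type*) [MulLoop M] :
    TwoSidedIdeal (MonoidAlgebra F M) :=
  TwoSidedIdeal.span
    ({x | ∃ a b c : M, x = circleAssociator F a b c + circleAssociator F b a c} ∪
     {x | ∃ a b c : M, x = circleAssociator F a b c + circleAssociator F a c b})

lemma circleMul_barElt (F : Type*) [Field F] {M : Type*} [MulLoop M] (u v : M) :
    circleMul (barElt F u) (barElt F v) = barElt F (u * v) := by
  simp only [circleMul, barElt]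
  have h2 : (1 - MonoidAlgebra.of F M u) * (1 - MonoidAlgebra.of F M v)
      = 1 - MonoidAlgebra.of F M u - MonoidAlgebra.of F M v
        + MonoidAlgebra.of F M u * MonoidAlgebra.of F M v := by
    simp only [mul_sub, sub_mul, one_mul, mul_one]; abel
  rw [h2, ← map_mul]
  abel

lemma circleAssociator_eq_neg (F : Type*) [Field F] {M : Type*} [MulLoop M]
    (a b c : M) : circleAssociator F a b c = - loopAssociator F a b c := by
  rw [circleAssociator, circleMul_barElt, circleMul_barElt, circleMul_barElt,
    circleMul_barElt, loopAssociator, barElt, barElt]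
  rw [map_mul, map_mul, map_mul, map_mul]
  abel

/-- **Statement 10.** Let `FM` and `F M̄` be the loop algebras of a free Moufang
loop `(M,·)` and of its circle loop `(M̄,∘)`, identified via the isomorphism
`φ(Σ α_u u) = Σ α_u ū`.  Then `I(M) = I(M̄)`: the ideal of `FM` generated by the
associator relations of `(M,·)` coincides with the ideal generated by the
associator relations of `(M̄,∘)`. -/
theorem stmt_10 {F : Type} [Field F] {X : Type} {M : Type} [MoufangLoop M]
    (x : X → M)
    (hfree : ∀ (N : Type) [MoufangLoop N] (f : X → N),
      ∃! g : M → N, (∀ a b : M, g (a * b) = g a * g b) ∧ ∀ i : X, g (x i) = f i) :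
    assocIdeal F M = circleAssocIdeal F M := by
  have key : ∀ a b c d e f : M,
      circleAssociator F a b c + circleAssociator F d e f
        = -(loopAssociator F a b c + loopAssociator F d e f) := by
    intro a b c d e f
    rw [circleAssociator_eq_neg, circleAssociator_eq_neg]; abel
  apply le_antisymm
  · intro y hy
    rw [assocIdeal, TwoSidedIdeal.mem_span_iff] at hy
    apply hy
    rintro z (⟨a,b,c,rfl⟩|⟨a,b,c,rfl⟩)
    · have : -(loopAssociator F a b c + loopAssociator F b a c)
          ∈ circleAssocIdeal F M := by
        apply TwoSidedIdeal.subset_span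
        exact Or.inl ⟨a,b,c, (key a b c b a c).symm⟩
      simpa using (circleAssocIdeal F M).neg_mem this
    · have : -(loopAssociator F a b c + loopAssociator F a c b)
          ∈ circleAssocIdeal F M := by
        apply TwoSidedIdeal.subset_span
        exact Or.inr ⟨a,b,c, (key a b c a c b).symm⟩
      simpa using (circleAssocIdeal F M).neg_mem this
  · intro y hy
    rw [circleAssocIdeal, TwoSidedIdeal.mem_span_iff] at hy
    apply hy
    rintro z (⟨a,b,c,rfl⟩|⟨a,b,c,rfl⟩)
    · rw [key]
      apply (assocIdeal F M).neg_mem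
      exact TwoSidedIdeal.subset_span (Or.inl ⟨a,b,c,rfl⟩)
    · rw [key]
      apply (assocIdeal F M).neg_mem
      exact TwoSidedIdeal.subset_span (Or.inr ⟨a,b,c,rfl⟩)
end
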